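/- For 1 < p ≤ 2, μ ≥ 0, and any matrices A, B: |S(A) - S(B)| ≤ C |A - B|^{p-1}, where S(A) = (μ+|A|)^{p-2} A and C depends only on p. In particular S is (p-1)-Hölder continuous uniformly in μ ≥ 0. -/

import Mathlib

/-!
Write `c r = (μ + r) ^ (p - 2)`, `a = ‖x‖ ≥ b = ‖y‖`, `t = ‖x - y‖`, and split
`S x - S y = c a • (x - y) + (c a - c b) • y`. Both pieces are controlled by the elementary
bound `R ^ (p - 2) * m ≤ m ^ (p - 1)` for `0 ≤ m ≤ R`: the first with `m = t / 2 ≤ a`, the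
second with `m = min b t`, after the monotonicity of `r ↦ r ^ (p - 1)` has given
`(c b - c a) * (μ + a) ≤ c b * (a - b)`.
-/

open Finset

noncomputable def frob (A : Matrix (Fin 3) (Fin 3) ℝ) : ℝ :=
  Real.sqrt (∑ i, ∑ j, (A i j) ^ 2)

noncomputable def Smap (μ p : ℝ) (A : Matrix (Fin 3) (Fin 3) ℝ) :
    Matrix (Fin 3) (Fin 3) ℝ :=
  ((μ + frob A) ^ (p - 2) : ℝ) • A

lemma rpow_sub_two_mul_le_rpow_sub_one {p m R : ℝ} (hp : p ≤ 2) (hm : 0 ≤ m) (hmR : m ≤ R) :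
    R ^ (p - 2) * m ≤ m ^ (p - 1) := by
  rcases hm.eq_or_lt with rfl | hm
  · simpa using Real.rpow_nonneg le_rfl (p - 1)
  calc R ^ (p - 2) * m ≤ m ^ (p - 2) * m :=
        mul_le_mul_of_nonneg_right (Real.rpow_le_rpow_of_nonpos hm hmR (by linarith)) hm.le
    _ = m ^ (p - 1) := by rw [← Real.rpow_add_one hm.ne']; ring_nf

lemma rpow_sub_rpow_mul_le {q u v : ℝ} (hq : -1 ≤ q) (hu : 0 < u) (huv : u ≤ v) :
    (u ^ q - v ^ q) * v ≤ u ^ q * (v - u) := by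
  have hmono : u ^ (q + 1) ≤ v ^ (q + 1) := Real.rpow_le_rpow hu.le huv (by linarith)
  rw [Real.rpow_add_one hu.ne', Real.rpow_add_one (hu.trans_le huv).ne'] at hmono
  linarith

lemma rpow_sub_rpow_mul_le_rpow_sub_one {μ p a b t : ℝ} (hμ : 0 ≤ μ) (hp1 : 1 ≤ p)
    (hp2 : p ≤ 2) (hb : 0 ≤ b) (hba : b ≤ a) (ht : 0 ≤ t) (habt : a - b ≤ t) :
    ((μ + b) ^ (p - 2) - (μ + a) ^ (p - 2)) * b ≤ t ^ (p - 1) := by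
  have hca : 0 ≤ (μ + a) ^ (p - 2) := Real.rpow_nonneg (by linarith) _
  have hcb : 0 ≤ (μ + b) ^ (p - 2) := Real.rpow_nonneg (by linarith) _
  have hdiff : ((μ + b) ^ (p - 2) - (μ + a) ^ (p - 2)) * b ≤ (μ + b) ^ (p - 2) * min b t := by
    rcases le_or_gt b t with hbt | htb
    · rw [min_eq_left hbt]; nlinarith
    · have hb0 : 0 < b := ht.trans_lt htb
      have hcab : (μ + a) ^ (p - 2) ≤ (μ + b) ^ (p - 2) :=
        Real.rpow_le_rpow_of_nonpos (by linarith) (by linarith) (by linarith)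
      calc ((μ + b) ^ (p - 2) - (μ + a) ^ (p - 2)) * b
          ≤ ((μ + b) ^ (p - 2) - (μ + a) ^ (p - 2)) * (μ + a) :=
            mul_le_mul_of_nonneg_left (by linarith) (by linarith)
        _ ≤ (μ + b) ^ (p - 2) * ((μ + a) - (μ + b)) :=
            rpow_sub_rpow_mul_le (by linarith) (by linarith) (by linarith)
        _ ≤ (μ + b) ^ (p - 2) * min b t := by
            rw [min_eq_right htb.le]
            exact mul_le_mul_of_nonneg_left (by linarith) hcb
  calc _ ≤ (μ + b) ^ (p - 2) * min b t := hdiff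
    _ ≤ (min b t) ^ (p - 1) :=
        rpow_sub_two_mul_le_rpow_sub_one hp2 (le_min hb ht) ((min_le_left _ _).trans (by linarith))
    _ ≤ t ^ (p - 1) := Real.rpow_le_rpow (le_min hb ht) (min_le_right _ _) (by linarith)

section HolderContinuity

variable {E : Type*} [NormedAddCommGroup E] [NormedSpace ℝ E] {μ p : ℝ}

lemma norm_rpow_smul_sub_rpow_smul_le_of_norm_le (hμ : 0 ≤ μ) (hp1 : 1 ≤ p) (hp2 : p ≤ 2)
    {x y : E} (hyx : ‖y‖ ≤ ‖x‖) :
    ‖(μ + ‖x‖) ^ (p - 2) • x - (μ + ‖y‖) ^ (p - 2) • y‖ ≤ 4 * ‖x - y‖ ^ (p - 1) := by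
  set a := ‖x‖
  set b := ‖y‖
  set t := ‖x - y‖
  set c : ℝ → ℝ := fun r => (μ + r) ^ (p - 2)
  have hb : 0 ≤ b := norm_nonneg y
  have ht : 0 ≤ t := norm_nonneg _
  have hta : t ≤ 2 * a := by linarith [norm_sub_le x y]
  have hca : 0 ≤ c a := Real.rpow_nonneg (by linarith) _
  have hfirst : ‖c a • (x - y)‖ ≤ 2 * t ^ (p - 1) :=
    calc ‖c a • (x - y)‖ = 2 * (c a * (t / 2)) := by
          rw [norm_smul, Real.norm_of_nonneg hca]; ring
      _ ≤ 2 * (t / 2) ^ (p - 1) := by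
          gcongr; exact rpow_sub_two_mul_le_rpow_sub_one hp2 (by linarith) (by linarith)
      _ ≤ 2 * t ^ (p - 1) := by gcongr; linarith
  have hsecond : ‖(c a - c b) • y‖ ≤ t ^ (p - 1) := by
    have hab : a - b ≤ t := by linarith [abs_norm_sub_norm_le x y, le_abs_self (a - b)]
    refine le_trans ?_ (rpow_sub_rpow_mul_le_rpow_sub_one hμ hp1 hp2 hb hyx ht hab)
    rcases hb.eq_or_lt with hb0 | hb0
    · simp [norm_smul, b, ← hb0]
    · have hcab : c a ≤ c b :=
        Real.rpow_le_rpow_of_nonpos (by linarith) (by linarith) (by linarith)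
      rw [norm_smul, Real.norm_of_nonpos (by linarith), neg_sub]
  calc ‖c a • x - c b • y‖ = ‖c a • (x - y) + (c a - c b) • y‖ := by
        rw [smul_sub, sub_smul]; abel_nf
    _ ≤ 4 * t ^ (p - 1) := by
        linarith [norm_add_le (c a • (x - y)) ((c a - c b) • y),
          Real.rpow_nonneg ht (p - 1)]

theorem norm_rpow_smul_sub_rpow_smul_le (hμ : 0 ≤ μ) (hp1 : 1 ≤ p) (hp2 : p ≤ 2) (x y : E) :
    ‖(μ + ‖x‖) ^ (p - 2) • x - (μ + ‖y‖) ^ (p - 2) • y‖ ≤ 4 * ‖x - y‖ ^ (p - 1) := by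
  rcases le_total ‖y‖ ‖x‖ with h | h
  · exact norm_rpow_smul_sub_rpow_smul_le_of_norm_le hμ hp1 hp2 h
  · rw [norm_sub_rev, norm_sub_rev x]
    exact norm_rpow_smul_sub_rpow_smul_le_of_norm_le hμ hp1 hp2 h

end HolderContinuity

section Frobenius

attribute [local instance] Matrix.frobeniusNormedAddCommGroup Matrix.frobeniusNormedSpace

lemma frob_eq_norm (A : Matrix (Fin 3) (Fin 3) ℝ) : frob A = ‖A‖ := by
  simp [frob, Matrix.frobenius_norm_def, Real.sqrt_eq_rpow]

lemma frob_Smap_sub_Smap_le {μ p : ℝ} (hμ : 0 ≤ μ) (hp1 : 1 ≤ p) (hp2 : p ≤ 2)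
    (A B : Matrix (Fin 3) (Fin 3) ℝ) :
    frob (Smap μ p A - Smap μ p B) ≤ 4 * frob (A - B) ^ (p - 1) := by
  simp only [Smap, frob_eq_norm]
  exact norm_rpow_smul_sub_rpow_smul_le hμ hp1 hp2 A B

end Frobenius

/-- `(p-1)`-Hölder continuity of `S`, uniformly in `μ ≥ 0`, for `1 < p ≤ 2`. -/
theorem statement13 (p : ℝ) (hp1 : 1 < p) (hp2 : p ≤ 2) :
    ∃ C : ℝ, 0 < C ∧ ∀ (μ : ℝ), 0 ≤ μ → ∀ A B : Matrix (Fin 3) (Fin 3) ℝ,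
      frob (Smap μ p A - Smap μ p B) ≤ C * frob (A - B) ^ (p - 1) :=
  ⟨4, by norm_num, fun _ hμ A B => frob_Smap_sub_Smap_le hμ hp1.le hp2 A B⟩
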